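/- Let S and T be disjoint finite sets of real numbers, with demand functions α : S → ℕ, β : T → ℕ and capacity functions on S and T, and let M be a minimum-cost matching between S and T satisfying the demands and capacities. If a, a′ ∈ S and b, b′ ∈ T are points with b′ < a′ < a < b such that (a, b′) ∈ M and (a′, b) ∈ M, then (a′, b′) ∈ M or (a, b) ∈ M. -/

import Mathlib

open Finset

/-- `M` is a matching between `S` and `T`: a finite set of ordered pairs `(s, t)`
with `s ∈ S` and `t ∈ T`. -/
def IsMatching (S T : Finset ℝ) (M : Finset (ℝ × ℝ)) : Prop :=
  ∀ p ∈ M, p.1 ∈ S ∧ p.2 ∈ T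

/-- The cost of a matching: the sum of `|s - t|` over its pairs. -/
noncomputable def matchCost (M : Finset (ℝ × ℝ)) : ℝ :=
  ∑ p ∈ M, |p.1 - p.2|

/-- The degree of a point `x`: the number of pairs of `M` containing `x`. -/
noncomputable def matchDeg (M : Finset (ℝ × ℝ)) (x : ℝ) : ℕ :=
  (M.filter (fun q => q.1 = x ∨ q.2 = x)).card

/-- `M` satisfies the demands `α` on `S` and `β` on `T`. -/
def SatisfiesDemands (S T : Finset ℝ) (α β : ℝ → ℕ) (M : Finset (ℝ × ℝ)) : Prop :=
  (∀ s ∈ S, α s ≤ matchDeg M s) ∧ (∀ t ∈ T, β t ≤ matchDeg M t)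

/-- `M` is a minimum-cost matching between `S` and `T` satisfying the demands. -/
def IsMinCostMatching (S T : Finset ℝ) (α β : ℝ → ℕ) (M : Finset (ℝ × ℝ)) : Prop :=
  IsMatching S T M ∧ SatisfiesDemands S T α β M ∧
    ∀ M' : Finset (ℝ × ℝ), IsMatching S T M' → SatisfiesDemands S T α β M' →
      matchCost M ≤ matchCost M'

/-- `M` satisfies the demands `α`, `β` and the capacities `CapS`, `CapT`. -/
def SatisfiesDemandsCaps (S T : Finset ℝ) (α β CapS CapT : ℝ → ℕ)
    (M : Finset (ℝ × ℝ)) : Prop :=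
  (∀ s ∈ S, α s ≤ matchDeg M s ∧ matchDeg M s ≤ CapS s) ∧
    (∀ t ∈ T, β t ≤ matchDeg M t ∧ matchDeg M t ≤ CapT t)

/-- `M` is a minimum-cost matching between `S` and `T` satisfying the demands
and capacities. -/
def IsMinCostMatchingCaps (S T : Finset ℝ) (α β CapS CapT : ℝ → ℕ)
    (M : Finset (ℝ × ℝ)) : Prop :=
  IsMatching S T M ∧ SatisfiesDemandsCaps S T α β CapS CapT M ∧
    ∀ M' : Finset (ℝ × ℝ), IsMatching S T M' →
      SatisfiesDemandsCaps S T α β CapS CapT M' →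
      matchCost M ≤ matchCost M'

/-
If `b' < a' < a < b` and both crossing pairs `(a, b')`, `(a', b)` lie in `M` while
neither `(a, b)` nor `(a', b')` does, replacing the former by the latter leaves every degree
unchanged, so the new matching is still feasible; but its cost is smaller by `2 (a - a')`,
contradicting minimality.
-/

section Uncross

variable {α β : Type*} [DecidableEq α] [DecidableEq β]

def uncross (M : Finset (α × β)) (a a' : α) (b b' : β) : Finset (α × β) :=
  insert (a', b') (insert (a, b) ((M.erase (a, b')).erase (a', b)))

variable {M : Finset (α × β)} {a a' : α} {b b' : β}

theorem mem_uncross {p : α × β} :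
    p ∈ uncross M a a' b b' ↔ p = (a', b') ∨ p = (a, b) ∨ p ≠ (a', b) ∧ p ≠ (a, b') ∧ p ∈ M := by
  simp only [uncross, mem_insert, mem_erase]

theorem sum_uncross {G : Type*} [AddCommGroup G] (f : α × β → G)
    (hab' : (a, b') ∈ M) (ha'b : (a', b) ∈ M) (hab : (a, b) ∉ M) (ha'b' : (a', b') ∉ M)
    (ha : a ≠ a') :
    ∑ p ∈ uncross M a a' b b', f p =
      ∑ p ∈ M, f p - f (a, b') - f (a', b) + f (a, b) + f (a', b') := by
  have ha'b_mem : (a', b) ∈ M.erase (a, b') := mem_erase.2 ⟨by simp [ha.symm], ha'b⟩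
  have hab_nmem : (a, b) ∉ (M.erase (a, b')).erase (a', b) :=
    fun h => hab (mem_of_mem_erase (mem_of_mem_erase h))
  have ha'b'_nmem : (a', b') ∉ insert (a, b) ((M.erase (a, b')).erase (a', b)) := by
    simp only [mem_insert, Prod.mk.injEq, ha.symm, false_and, false_or]
    exact fun h => ha'b' (mem_of_mem_erase (mem_of_mem_erase h))
  rw [uncross, sum_insert ha'b'_nmem, sum_insert hab_nmem, sum_erase_eq_sub ha'b_mem,
    sum_erase_eq_sub hab']
  abel

end Uncross

theorem IsMatching.uncross {S T : Finset ℝ} {M : Finset (ℝ × ℝ)} (hM : IsMatching S T M)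
    {a a' b b' : ℝ} (hab' : (a, b') ∈ M) (ha'b : (a', b) ∈ M) :
    IsMatching S T (uncross M a a' b b') := by
  intro p hp
  rcases mem_uncross.1 hp with rfl | rfl | ⟨-, -, hp⟩
  · exact ⟨(hM _ ha'b).1, (hM _ hab').2⟩
  · exact ⟨(hM _ hab').1, (hM _ ha'b).2⟩
  · exact hM p hp

theorem matchDeg_eq_sum (M : Finset (ℝ × ℝ)) (x : ℝ) :
    (matchDeg M x : ℤ) = ∑ q ∈ M, if q.1 = x ∨ q.2 = x then 1 else 0 := by
  rw [matchDeg, card_filter]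
  push_cast
  rfl

theorem matchDeg_uncross {M : Finset (ℝ × ℝ)} {a a' b b' : ℝ}
    (hab' : (a, b') ∈ M) (ha'b : (a', b) ∈ M) (hab : (a, b) ∉ M) (ha'b' : (a', b') ∉ M)
    (ha : a ≠ a') (h₁ : a ≠ b) (h₂ : a ≠ b') (h₃ : a' ≠ b) (h₄ : a' ≠ b') (x : ℝ) :
    matchDeg (uncross M a a' b b') x = matchDeg M x := by
  have hsum := sum_uncross (fun q : ℝ × ℝ => if q.1 = x ∨ q.2 = x then (1 : ℤ) else 0)
    hab' ha'b hab ha'b' ha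
  rw [← matchDeg_eq_sum, ← matchDeg_eq_sum] at hsum
  -- each endpoint loses one pair and gains one, since `a, a'` differ from `b, b'`
  have key : ((if a = x ∨ b = x then 1 else 0) + if a' = x ∨ b' = x then 1 else 0 : ℤ) =
      (if a = x ∨ b' = x then 1 else 0) + if a' = x ∨ b = x then 1 else 0 := by
    split_ifs <;> grind
  have : (matchDeg (uncross M a a' b b') x : ℤ) = matchDeg M x := by
    rw [hsum]
    linarith
  exact_mod_cast this

theorem matchCost_uncross {M : Finset (ℝ × ℝ)} {a a' b b' : ℝ}
    (hab' : (a, b') ∈ M) (ha'b : (a', b) ∈ M) (hab : (a, b) ∉ M) (ha'b' : (a', b') ∉ M)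
    (h₁ : b' < a') (h₂ : a' < a) (h₃ : a < b) :
    matchCost (uncross M a a' b b') = matchCost M - 2 * (a - a') := by
  rw [matchCost, matchCost, sum_uncross _ hab' ha'b hab ha'b' h₂.ne']
  simp only
  rw [abs_of_pos (by linarith : 0 < a' - b'), abs_of_neg (by linarith : a - b < 0),
    abs_of_pos (by linarith : 0 < a - b'), abs_of_neg (by linarith : a' - b < 0)]
  ring

theorem stmt_3_general (S T : Finset ℝ) (α β CapS CapT : ℝ → ℕ)
    (M : Finset (ℝ × ℝ)) (hM : IsMinCostMatchingCaps S T α β CapS CapT M)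
    (a a' b b' : ℝ)
    (h1 : b' < a') (h2 : a' < a) (h3 : a < b)
    (hab' : (a, b') ∈ M) (ha'b : (a', b) ∈ M) :
    (a', b') ∈ M ∨ (a, b) ∈ M := by
  by_contra! ⟨ha'b', hab⟩
  obtain ⟨hmatch, ⟨hS, hT⟩, hmin⟩ := hM
  have hdeg := matchDeg_uncross hab' ha'b hab ha'b' h2.ne' (by linarith) (by linarith)
    (by linarith) h1.ne'
  have hfeas : SatisfiesDemandsCaps S T α β CapS CapT (uncross M a a' b b') :=
    ⟨fun s hs => hdeg s ▸ hS s hs, fun t ht => hdeg t ▸ hT t ht⟩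
  have hcost := hmin _ (hmatch.uncross hab' ha'b) hfeas
  rw [matchCost_uncross hab' ha'b hab ha'b' h1 h2 h3] at hcost
  linarith

/-- In a minimum-cost matching with demands and capacities, if `b′ < a′ < a < b`
with `(a, b′) ∈ M` and `(a′, b) ∈ M`, then `(a′, b′) ∈ M` or `(a, b) ∈ M`. -/
theorem stmt_3 (S T : Finset ℝ) (hST : Disjoint S T) (α β CapS CapT : ℝ → ℕ)
    (M : Finset (ℝ × ℝ)) (hM : IsMinCostMatchingCaps S T α β CapS CapT M)
    (a a' b b' : ℝ) (ha : a ∈ S) (ha' : a' ∈ S) (hb : b ∈ T) (hb' : b' ∈ T)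
    (h1 : b' < a') (h2 : a' < a) (h3 : a < b)
    (hab' : (a, b') ∈ M) (ha'b : (a', b) ∈ M) :
    (a', b') ∈ M ∨ (a, b) ∈ M :=
  stmt_3_general S T α β CapS CapT M hM a a' b b' h1 h2 h3 hab' ha'b
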